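/- arXiv:1912.03275 — 6 statements merged into one kernel-verified Lean document; each statement's English description precedes it below -/
import Mathlib

section
/- Let G be a group, A a C*-algebra, α and δ actions of G on A, and θ an action of G on M₂(A) such that θ_g(e₁₁(a)) = e₁₁(α_g(a)) and θ_g(e₂₂(a)) = e₂₂(δ_g(a)) for all g ∈ G and a ∈ A. Then there exist unique families (β_g)_{g∈G} and (γ_g)_{g∈G} of ℂ-linear maps A → A such that for all g ∈ G and x, y, z, w ∈ A, θ_g applied to the matrix with rows (x, y) and (z, w) is the matrix with rows (α_g(x), β_g(y)) and (γ_g(z), δ_g(w)); moreover these satisfy, for all g, h ∈ G and a, b, x, y ∈ A: γ_g(a·x) = δ_g(a)·γ_g(x), γ_g(x·b) = γ_g(x)·α_g(b), β_g(a·x) = α_g(a)·β_g(x), β_g(x·b) = β_g(x)·δ_g(b), α_g(x·y) = β_g(x)·γ_g(y), δ_g(x·y) = γ_g(x)·β_g(y), β_g(y) = (γ_g(y*))*, γ_{gh}(x) = γ_g(γ_h(x)), and β_{gh}(x) = β_g(β_h(x)). -/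
open Matrix

lemma aux_add_eq_zero {A : Type*} [NonUnitalCStarAlgebra A] {x y : A}
    (h : star x * x + star y * y = 0) : x = 0 ∧ y = 0 := by
  have key : ∀ z : A, ((star z * z : A) : Unitization ℂ A) = star (z : Unitization ℂ A) * z := by
    intro z; rw [Unitization.inr_mul, Unitization.inr_star]
  have h' : star (x : Unitization ℂ A) * x + star (y : Unitization ℂ A) * y = 0 := by
    have h0 : ((star x * x + star y * y : A) : Unitization ℂ A) = 0 := by
      rw [h, Unitization.inr_zero]
    rw [Unitization.inr_add, key, key] at h0
    exact h0
  have h2 := (add_eq_zero_iff_of_nonneg (star_mul_self_nonneg _) (star_mul_self_nonneg _)).mp h'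
  refine ⟨(CStarRing.star_mul_self_eq_zero_iff x).mp ?_, (CStarRing.star_mul_self_eq_zero_iff y).mp ?_⟩
  · exact Unitization.inr_injective (R := ℂ) (((key x).trans h2.1).trans (Unitization.inr_zero ℂ).symm)
  · exact Unitization.inr_injective (R := ℂ) (((key y).trans h2.2).trans (Unitization.inr_zero ℂ).symm)

lemma star_stdBasisMatrix' {A : Type*} [NonUnitalCStarAlgebra A] (i j : Fin 2) (a : A) :
    star (single i j a) = single j i (star a) := by
  ext i' j'
  simp only [Matrix.star_apply, Matrix.single, Matrix.of_apply]
  aesop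

lemma corner_shape {A : Type*} [NonUnitalCStarAlgebra A] {N : Matrix (Fin 2) (Fin 2) A} {c d : A}
    (h1 : star N * N = single 0 0 c) (h2 : N * star N = single 1 1 d) :
    N = single 1 0 (N 1 0) := by
  have e1 : star (N 0 1) * N 0 1 + star (N 1 1) * N 1 1 = 0 := by
    have := congrFun (congrFun h1 1) 1
    simpa [Matrix.mul_apply, Matrix.star_apply, Fin.sum_univ_two, Matrix.single] using this
  obtain ⟨z01, z11⟩ := aux_add_eq_zero e1
  have e2 : star (star (N 0 0)) * star (N 0 0) + star (star (N 0 1)) * star (N 0 1) = 0 := by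
    have := congrFun (congrFun h2 0) 0
    simpa [Matrix.mul_apply, Matrix.star_apply, Fin.sum_univ_two, Matrix.single] using this
  obtain ⟨z00, -⟩ := aux_add_eq_zero e2
  have z00' : N 0 0 = 0 := star_eq_zero.mp z00
  ext i j
  fin_cases i <;> fin_cases j <;> simp [Matrix.single, z00', z01, z11]

lemma e10_inj {A : Type*} [NonUnitalCStarAlgebra A] {p q : A}
    (h : single (1 : Fin 2) (0 : Fin 2) p = single 1 0 q) : p = q := by
  simpa [Matrix.single_apply_same] using congrFun (congrFun h 1) 0

lemma e01_inj {A : Type*} [NonUnitalCStarAlgebra A] {p q : A}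
    (h : single (0 : Fin 2) (1 : Fin 2) p = single 0 1 q) : p = q := by
  simpa [Matrix.single_apply_same] using congrFun (congrFun h 0) 1

lemma e00_inj {A : Type*} [NonUnitalCStarAlgebra A] {p q : A}
    (h : single (0 : Fin 2) (0 : Fin 2) p = single 0 0 q) : p = q := by
  simpa [Matrix.single_apply_same] using congrFun (congrFun h 0) 0

lemma e11_inj {A : Type*} [NonUnitalCStarAlgebra A] {p q : A}
    (h : single (1 : Fin 2) (1 : Fin 2) p = single 1 1 q) : p = q := by
  simpa [Matrix.single_apply_same] using congrFun (congrFun h 1) 1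

lemma matrix_decomp {A : Type*} [NonUnitalCStarAlgebra A] (x y z w : A) :
    !![x, y; z, w] = single 0 0 x + single 0 1 y +
      single 1 0 z + single 1 1 w := by
  ext i j
  fin_cases i <;> fin_cases j <;> simp [Matrix.single]


/-- Given a group action `θ` on `M₂(A)` whose diagonal-corner restrictions are
the actions `α` and `δ` on the C*-algebra `A`, there exist unique families `β`, `γ` of
`ℂ`-linear maps on `A` describing `θ` entrywise, and they satisfy the stated module, product,
adjoint and cocycle identities. -/
theorem stmt_0 {G : Type*} [Group G] {A : Type*} [NonUnitalCStarAlgebra A]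
    (α δ : G → (A ≃⋆ₐ[ℂ] A))
    (hα1 : ∀ x : A, α 1 x = x) (hαmul : ∀ (g h : G) (x : A), α (g * h) x = α g (α h x))
    (hδ1 : ∀ x : A, δ 1 x = x) (hδmul : ∀ (g h : G) (x : A), δ (g * h) x = δ g (δ h x))
    (θ : G → (Matrix (Fin 2) (Fin 2) A ≃⋆ₐ[ℂ] Matrix (Fin 2) (Fin 2) A))
    (hθ1 : ∀ m, θ 1 m = m) (hθmul : ∀ (g h : G) m, θ (g * h) m = θ g (θ h m))
    (hc11 : ∀ (g : G) (a : A), θ g (single 0 0 a) = single 0 0 (α g a))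
    (hc22 : ∀ (g : G) (a : A), θ g (single 1 1 a) = single 1 1 (δ g a)) :
    ∃ β γ : G → (A →ₗ[ℂ] A),
      (∀ (g : G) (x y z w : A), θ g !![x, y; z, w] = !![α g x, β g y; γ g z, δ g w]) ∧
      (∀ β' γ' : G → (A →ₗ[ℂ] A),
        (∀ (g : G) (x y z w : A), θ g !![x, y; z, w] = !![α g x, β' g y; γ' g z, δ g w]) →
        β' = β ∧ γ' = γ) ∧
      (∀ (g h : G) (a b x y : A),
        γ g (a * x) = δ g a * γ g x ∧
        γ g (x * b) = γ g x * α g b ∧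
        β g (a * x) = α g a * β g x ∧
        β g (x * b) = β g x * δ g b ∧
        α g (x * y) = β g x * γ g y ∧
        δ g (x * y) = γ g x * β g y ∧
        β g y = star (γ g (star y)) ∧
        γ (g * h) x = γ g (γ h x) ∧
        β (g * h) x = β g (β h x)) := by
  set γf : G → A → A := fun g z => (θ g (single 1 0 z)) 1 0 with hγf
  have hγ : ∀ (g : G) (z : A), θ g (single 1 0 z) = single 1 0 (γf g z) := by
    intro g z
    refine corner_shape (c := α g (star z * z)) (d := δ g (z * star z)) ?_ ?_
    · rw [← map_star, ← _root_.map_mul, star_stdBasisMatrix', single_mul_single_same, hc11]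
    · rw [← map_star, ← _root_.map_mul, star_stdBasisMatrix', single_mul_single_same, hc22]
  set βf : G → A → A := fun g y => star (γf g (star y)) with hβf
  have hβ : ∀ (g : G) (y : A), θ g (single 0 1 y) = single 0 1 (βf g y) := by
    intro g y
    have : single (0 : Fin 2) (1 : Fin 2) y = star (single 1 0 (star y)) := by
      rw [star_stdBasisMatrix', star_star]
    rw [this, map_star, hγ, star_stdBasisMatrix']
  -- linearity
  have γadd : ∀ (g : G) (z w : A), γf g (z + w) = γf g z + γf g w := by
    intro g z w
    simp only [hγf, single_add, map_add, Matrix.add_apply]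
  have γsmul : ∀ (g : G) (c : ℂ) (z : A), γf g (c • z) = c • γf g z := by
    intro g c z
    simp only [hγf, ← smul_single, _root_.map_smul, Matrix.smul_apply]
  set γ : G → (A →ₗ[ℂ] A) := fun g =>
    { toFun := γf g, map_add' := γadd g, map_smul' := γsmul g } with hγdef
  have βadd : ∀ (g : G) (z w : A), βf g (z + w) = βf g z + βf g w := by
    intro g z w
    simp only [hβf, star_add, γadd]
  have βsmul : ∀ (g : G) (c : ℂ) (z : A), βf g (c • z) = c • βf g z := by
    intro g c z
    simp only [hβf, star_smul, γsmul, RingHom.id_apply, star_star]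
  set β : G → (A →ₗ[ℂ] A) := fun g =>
    { toFun := βf g, map_add' := βadd g, map_smul' := βsmul g } with hβdef
  have hγ' : ∀ (g : G) (z : A), θ g (single 1 0 z) = single 1 0 (γ g z) :=
    fun g z => hγ g z
  have hβ' : ∀ (g : G) (y : A), θ g (single 0 1 y) = single 0 1 (β g y) :=
    fun g y => hβ g y
  have hmain : ∀ (g : G) (x y z w : A),
      θ g !![x, y; z, w] = !![α g x, β g y; γ g z, δ g w] := by
    intro g x y z w
    rw [matrix_decomp, map_add, map_add, map_add, hc11, hc22, hβ', hγ', matrix_decomp]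
  refine ⟨β, γ, hmain, ?_, ?_⟩
  · intro β' γ' h'
    constructor
    · funext g
      apply LinearMap.ext; intro y
      have h1 := (h' g 0 y 0 0).symm.trans (hmain g 0 y 0 0)
      have := congrFun (congrFun h1 0) 1
      simpa using this
    · funext g
      apply LinearMap.ext; intro z
      have h1 := (h' g 0 0 z 0).symm.trans (hmain g 0 0 z 0)
      have := congrFun (congrFun h1 1) 0
      simpa using this
  · intro g h a b x y
    refine ⟨?_, ?_, ?_, ?_, ?_, ?_, rfl, ?_, ?_⟩
    · apply e10_inj (A := A)
      have key := (single_mul_single_same (i := (1 : Fin 2)) (j := (1 : Fin 2)) (c := a) (k := (0 : Fin 2)) (d := x)).symm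
      rw [← hγ', key, _root_.map_mul, hc22, hγ', single_mul_single_same]
    · apply e10_inj (A := A)
      have key := (single_mul_single_same (i := (1 : Fin 2)) (j := (0 : Fin 2)) (c := x) (k := (0 : Fin 2)) (d := b)).symm
      rw [← hγ', key, _root_.map_mul, hγ', hc11, single_mul_single_same]
    · apply e01_inj (A := A)
      have key := (single_mul_single_same (i := (0 : Fin 2)) (j := (0 : Fin 2)) (c := a) (k := (1 : Fin 2)) (d := x)).symm
      rw [← hβ', key, _root_.map_mul, hc11, hβ', single_mul_single_same]
    · apply e01_inj (A := A)
      have key := (single_mul_single_same (i := (0 : Fin 2)) (j := (1 : Fin 2)) (c := x) (k := (1 : Fin 2)) (d := b)).symm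
      rw [← hβ', key, _root_.map_mul, hβ', hc22, single_mul_single_same]
    · apply e00_inj (A := A)
      have key := (single_mul_single_same (i := (0 : Fin 2)) (j := (1 : Fin 2)) (c := x) (k := (0 : Fin 2)) (d := y)).symm
      rw [← hc11, key, _root_.map_mul, hβ', hγ', single_mul_single_same]
    · apply e11_inj (A := A)
      have key := (single_mul_single_same (i := (1 : Fin 2)) (j := (0 : Fin 2)) (c := x) (k := (1 : Fin 2)) (d := y)).symm
      rw [← hc22, key, _root_.map_mul, hγ', hβ', single_mul_single_same]
    · apply e10_inj (A := A)
      rw [← hγ', hθmul, hγ', hγ']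
    · apply e01_inj (A := A)
      rw [← hβ', hθmul, hβ', hβ']
end

section
/- Let G be a group, A a C*-algebra, α an action of G on A, and (γ_g)_{g∈G} a family of ℂ-linear maps A → A such that γ_1 = id_A, γ_{gh} = γ_g ∘ γ_h for all g, h ∈ G, γ_g(x·a) = γ_g(x)·α_g(a) for all g ∈ G and x, a ∈ A, and (γ_g(x))*·γ_g(y) = α_g(x*·y) for all g ∈ G and x, y ∈ A. Then there exist an action θ of G on M₂(A) and an action δ of G on A such that the corner hypotheses hold for (θ, α, δ) and θ_g(e₂₁(z)) = e₂₁(γ_g(z)) for all g ∈ G and z ∈ A; moreover θ is the unique action of G on M₂(A) with these properties. -/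
open Matrix


section Stmt3Aux

set_option linter.unusedSectionVars false

variable {G : Type*} [Group G] {A : Type*} [NonUnitalCStarAlgebra A]

/-- upper-right corner map -/
def stmt3Beta (γ : G → (A →ₗ[ℂ] A)) (g : G) : A → A := fun b => star (γ g (star b))

/-- lower-right corner map -/
def stmt3Del (α : G → (A ≃⋆ₐ[ℂ] A)) (γ : G → (A →ₗ[ℂ] A)) (g : G) : A → A :=
  fun d => star (γ g (α g⁻¹ (star (γ g d))))

variable (α : G → (A ≃⋆ₐ[ℂ] A))
variable (hα1 : ∀ x : A, α 1 x = x) (hαmul : ∀ (g h : G) (x : A), α (g * h) x = α g (α h x))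
variable (γ : G → (A →ₗ[ℂ] A))
variable (hγ1 : ∀ x : A, γ 1 x = x)
variable (hγmul : ∀ (g h : G) (x : A), γ (g * h) x = γ g (γ h x))
variable (hγmod : ∀ (g : G) (x a : A), γ g (x * a) = γ g x * α g a)
variable (hγinner : ∀ (g : G) (x y : A), star (γ g x) * γ g y = α g (star x * y))

include hα1 hαmul hγ1 hγmul hγmod hγinner

lemma stmt3_ainv1 : ∀ (g : G) (x : A), α g (α g⁻¹ x) = x := by
  intro g x; rw [← hαmul]; simp [hα1]

lemma stmt3_ainv2 : ∀ (g : G) (x : A), α g⁻¹ (α g x) = x := by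
  intro g x; rw [← hαmul]; simp [hα1]

lemma stmt3_gsurj : ∀ (g : G) (z : A), γ g (γ g⁻¹ z) = z := by
  intro g z; rw [← hγmul]; simp [hγ1]

lemma stmt3_sep : ∀ (g : G) (c c' : A), (∀ v, c * γ g v = c' * γ g v) → c = c' := by
  intro g c c' h
  have h' : ∀ z : A, (c - c') * z = 0 := by
    intro z
    have := h (γ g⁻¹ z)
    rw [stmt3_gsurj α hα1 hαmul γ hγ1 hγmul hγmod hγinner] at this
    rw [sub_mul, this, sub_self]
  have h2 := h' (star (c - c'))
  rw [CStarRing.mul_star_self_eq_zero_iff] at h2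
  exact sub_eq_zero.mp h2

lemma stmt3_dg : ∀ (g : G) (x v : A),
    stmt3Del α γ g x * γ g v = γ g (x * v) := by
  intro g x v
  unfold stmt3Del
  rw [hγinner, ← map_star, star_star, _root_.map_mul,
    stmt3_ainv1 α hα1 hαmul γ hγ1 hγmul hγmod hγinner, ← hγmod]

lemma stmt3_bg : ∀ (g : G) (x v : A),
    stmt3Beta γ g x * γ g v = α g (x * v) := by
  intro g x v
  unfold stmt3Beta
  rw [hγinner, star_star]

lemma stmt3_gsd : ∀ (g : G) (x v : A),
    star (γ g v) * stmt3Del α γ g x = star (γ g (star x * v)) := by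
  intro g x v
  apply stmt3_sep α hα1 hαmul γ hγ1 hγmul hγmod hγinner g
  intro y
  rw [mul_assoc, stmt3_dg α hα1 hαmul γ hγ1 hγmul hγmod hγinner, hγinner, hγinner,
    StarMul.star_mul, star_star, mul_assoc]

lemma stmt3_dstar : ∀ (g : G) (x : A),
    stmt3Del α γ g (star x) = star (stmt3Del α γ g x) := by
  intro g x
  apply stmt3_sep α hα1 hαmul γ hγ1 hγmul hγmod hγinner g
  intro v
  rw [stmt3_dg α hα1 hαmul γ hγ1 hγmul hγmod hγinner]
  have h := congrArg star (stmt3_gsd α hα1 hαmul γ hγ1 hγmul hγmod hγinner g x v)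
  rw [StarMul.star_mul, star_star, star_star] at h
  exact h.symm

lemma stmt3_dmul : ∀ (g : G) (x y : A),
    stmt3Del α γ g (x * y) = stmt3Del α γ g x * stmt3Del α γ g y := by
  intro g x y
  apply stmt3_sep α hα1 hαmul γ hγ1 hγmul hγmod hγinner g
  intro v
  rw [stmt3_dg α hα1 hαmul γ hγ1 hγmul hγmod hγinner, mul_assoc, mul_assoc,
    stmt3_dg α hα1 hαmul γ hγ1 hγmul hγmod hγinner,
    stmt3_dg α hα1 hαmul γ hγ1 hγmul hγmod hγinner]

lemma stmt3_gbd : ∀ (g : G) (x y : A),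
    stmt3Del α γ g (x * y) = γ g x * stmt3Beta γ g y := by
  intro g x y
  apply stmt3_sep α hα1 hαmul γ hγ1 hγmul hγmod hγinner g
  intro v
  rw [stmt3_dg α hα1 hαmul γ hγ1 hγmul hγmod hγinner, mul_assoc, mul_assoc,
    stmt3_bg α hα1 hαmul γ hγ1 hγmul hγmod hγinner, ← hγmod]

lemma stmt3_bd : ∀ (g : G) (x y : A),
    stmt3Beta γ g (x * y) = stmt3Beta γ g x * stmt3Del α γ g y := by
  intro g x y
  show star (γ g (star (x * y))) = star (γ g (star x)) * stmt3Del α γ g y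
  rw [StarMul.star_mul]
  exact (stmt3_gsd α hα1 hαmul γ hγ1 hγmul hγmod hγinner g y (star x)).symm

lemma stmt3_ab : ∀ (g : G) (x y : A),
    stmt3Beta γ g (x * y) = α g x * stmt3Beta γ g y := by
  intro g x y
  show star (γ g (star (x * y))) = α g x * star (γ g (star y))
  rw [StarMul.star_mul, hγmod, StarMul.star_mul, ← map_star, star_star]

lemma stmt3_d1 : ∀ x : A, stmt3Del α γ 1 x = x := by
  intro x
  simp [stmt3Del, hγ1, hα1, inv_one]

lemma stmt3_dcomp : ∀ (g h : G) (x : A),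
    stmt3Del α γ (g * h) x = stmt3Del α γ g (stmt3Del α γ h x) := by
  intro g h x
  apply stmt3_sep α hα1 hαmul γ hγ1 hγmul hγmod hγinner (g * h)
  intro v
  rw [stmt3_dg α hα1 hαmul γ hγ1 hγmul hγmod hγinner, hγmul, hγmul,
    stmt3_dg α hα1 hαmul γ hγ1 hγmul hγmod hγinner,
    stmt3_dg α hα1 hαmul γ hγ1 hγmul hγmod hγinner]

lemma stmt3_b1 : ∀ x : A, stmt3Beta γ 1 x = x := by
  intro x; simp [stmt3Beta, hγ1]

lemma stmt3_bcomp : ∀ (g h : G) (x : A),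
    stmt3Beta γ (g * h) x = stmt3Beta γ g (stmt3Beta γ h x) := by
  intro g h x; simp [stmt3Beta, hγmul, star_star]

lemma stmt3_badd : ∀ (g : G) (x y : A),
    stmt3Beta γ g (x + y) = stmt3Beta γ g x + stmt3Beta γ g y := by
  intro g x y; simp [stmt3Beta, star_add, map_add]

lemma stmt3_bsmul : ∀ (g : G) (c : ℂ) (x : A),
    stmt3Beta γ g (c • x) = c • stmt3Beta γ g x := by
  intro g c x; simp [stmt3Beta, star_smul, _root_.map_smul]

lemma stmt3_dadd : ∀ (g : G) (x y : A),
    stmt3Del α γ g (x + y) = stmt3Del α γ g x + stmt3Del α γ g y := by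
  intro g x y; simp [stmt3Del, star_add, map_add]

lemma stmt3_dsmul : ∀ (g : G) (c : ℂ) (x : A),
    stmt3Del α γ g (c • x) = c • stmt3Del α γ g x := by
  intro g c x; simp [stmt3Del, star_smul, _root_.map_smul]


/-- entrywise corner maps -/
def stmt3Phi (α : G → (A ≃⋆ₐ[ℂ] A)) (γ : G → (A →ₗ[ℂ] A)) (g : G) (i j : Fin 2) : A → A :=
  if i = 0 then (if j = 0 then fun x => α g x else stmt3Beta γ g)
  else (if j = 0 then fun x => γ g x else stmt3Del α γ g)

/-- the matrix map -/
def stmt3Theta (α : G → (A ≃⋆ₐ[ℂ] A)) (γ : G → (A →ₗ[ℂ] A)) (g : G) :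
    Matrix (Fin 2) (Fin 2) A → Matrix (Fin 2) (Fin 2) A :=
  fun m => Matrix.of fun i j => stmt3Phi α γ g i j (m i j)

lemma stmt3Phi_mul : ∀ (g : G) (i k j : Fin 2) (x y : A),
    stmt3Phi α γ g i j (x * y) = stmt3Phi α γ g i k x * stmt3Phi α γ g k j y := by
  intro g i k j x y
  fin_cases i <;> fin_cases k <;> fin_cases j <;>
    simp only [stmt3Phi, if_pos rfl, if_neg (show (1 : Fin 2) ≠ 0 by decide)]
  · exact _root_.map_mul (α g) x y
  · exact stmt3_ab α hα1 hαmul γ hγ1 hγmul hγmod hγinner g x y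
  · exact (stmt3_bg α hα1 hαmul γ hγ1 hγmul hγmod hγinner g x y).symm
  · exact stmt3_bd α hα1 hαmul γ hγ1 hγmul hγmod hγinner g x y
  · exact hγmod g x y
  · exact stmt3_gbd α hα1 hαmul γ hγ1 hγmul hγmod hγinner g x y
  · exact (stmt3_dg α hα1 hαmul γ hγ1 hγmul hγmod hγinner g x y).symm
  · exact stmt3_dmul α hα1 hαmul γ hγ1 hγmul hγmod hγinner g x y

lemma stmt3Phi_add : ∀ (g : G) (i j : Fin 2) (x y : A),
    stmt3Phi α γ g i j (x + y) = stmt3Phi α γ g i j x + stmt3Phi α γ g i j y := by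
  intro g i j x y
  fin_cases i <;> fin_cases j <;>
    simp only [stmt3Phi, if_pos rfl, if_neg (show (1 : Fin 2) ≠ 0 by decide)]
  · exact map_add (α g) x y
  · exact stmt3_badd α hα1 hαmul γ hγ1 hγmul hγmod hγinner g x y
  · exact map_add (γ g) x y
  · exact stmt3_dadd α hα1 hαmul γ hγ1 hγmul hγmod hγinner g x y

lemma stmt3Phi_smul : ∀ (g : G) (i j : Fin 2) (c : ℂ) (x : A),
    stmt3Phi α γ g i j (c • x) = c • stmt3Phi α γ g i j x := by
  intro g i j c x
  fin_cases i <;> fin_cases j <;>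
    simp only [stmt3Phi, if_pos rfl, if_neg (show (1 : Fin 2) ≠ 0 by decide)]
  · exact _root_.map_smul (α g) c x
  · exact stmt3_bsmul α hα1 hαmul γ hγ1 hγmul hγmod hγinner g c x
  · exact _root_.map_smul (γ g) c x
  · exact stmt3_dsmul α hα1 hαmul γ hγ1 hγmul hγmod hγinner g c x

lemma stmt3Phi_star : ∀ (g : G) (i j : Fin 2) (x : A),
    stmt3Phi α γ g i j (star x) = star (stmt3Phi α γ g j i x) := by
  intro g i j x
  fin_cases i <;> fin_cases j <;>
    simp only [stmt3Phi, Fin.isValue, reduceIte, if_pos rfl,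
      if_neg (show (1 : Fin 2) ≠ 0 by decide)]
  · exact map_star (α g) x
  · show stmt3Beta γ g (star x) = star ((γ g) x)
    simp [stmt3Beta, star_star]
  · show (γ g) (star x) = star (stmt3Beta γ g x)
    simp [stmt3Beta, star_star]
  · exact stmt3_dstar α hα1 hαmul γ hγ1 hγmul hγmod hγinner g x

lemma stmt3Phi_one : ∀ (i j : Fin 2) (x : A), stmt3Phi α γ (1 : G) i j x = x := by
  intro i j x
  fin_cases i <;> fin_cases j <;>
    simp only [stmt3Phi, if_pos rfl, if_neg (show (1 : Fin 2) ≠ 0 by decide)]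
  · exact hα1 x
  · exact stmt3_b1 α hα1 hαmul γ hγ1 hγmul hγmod hγinner x
  · exact hγ1 x
  · exact stmt3_d1 α hα1 hαmul γ hγ1 hγmul hγmod hγinner x

lemma stmt3Phi_comp : ∀ (g h : G) (i j : Fin 2) (x : A),
    stmt3Phi α γ (g * h) i j x = stmt3Phi α γ g i j (stmt3Phi α γ h i j x) := by
  intro g h i j x
  fin_cases i <;> fin_cases j <;>
    simp only [stmt3Phi, if_pos rfl, if_neg (show (1 : Fin 2) ≠ 0 by decide)]
  · exact hαmul g h x
  · exact stmt3_bcomp α hα1 hαmul γ hγ1 hγmul hγmod hγinner g h x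
  · exact hγmul g h x
  · exact stmt3_dcomp α hα1 hαmul γ hγ1 hγmul hγmod hγinner g h x

lemma stmt3Phi_zero : ∀ (g : G) (i j : Fin 2), stmt3Phi α γ g i j 0 = 0 := by
  intro g i j
  have h := stmt3Phi_add α hα1 hαmul γ hγ1 hγmul hγmod hγinner g i j 0 0
  rw [zero_add] at h
  exact add_eq_left.mp h.symm

/-- the star algebra equivalence -/
def stmt3ThetaEquiv (g : G) :
    Matrix (Fin 2) (Fin 2) A ≃⋆ₐ[ℂ] Matrix (Fin 2) (Fin 2) A where
  toFun := stmt3Theta α γ g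
  invFun := stmt3Theta α γ g⁻¹
  left_inv := by
    intro m
    ext i j
    show stmt3Phi α γ g⁻¹ i j (stmt3Phi α γ g i j (m i j)) = m i j
    rw [← stmt3Phi_comp α hα1 hαmul γ hγ1 hγmul hγmod hγinner, inv_mul_cancel,
      stmt3Phi_one α hα1 hαmul γ hγ1 hγmul hγmod hγinner]
  right_inv := by
    intro m
    ext i j
    show stmt3Phi α γ g i j (stmt3Phi α γ g⁻¹ i j (m i j)) = m i j
    rw [← stmt3Phi_comp α hα1 hαmul γ hγ1 hγmul hγmod hγinner, mul_inv_cancel,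
      stmt3Phi_one α hα1 hαmul γ hγ1 hγmul hγmod hγinner]
  map_mul' := by
    intro m n
    ext i j
    show stmt3Phi α γ g i j ((m * n) i j) = _
    rw [Matrix.mul_apply, Fin.sum_univ_two,
      stmt3Phi_add α hα1 hαmul γ hγ1 hγmul hγmod hγinner,
      stmt3Phi_mul α hα1 hαmul γ hγ1 hγmul hγmod hγinner g i 0 j,
      stmt3Phi_mul α hα1 hαmul γ hγ1 hγmul hγmod hγinner g i 1 j]
    show _ = (stmt3Theta α γ g m * stmt3Theta α γ g n) i j
    rw [Matrix.mul_apply, Fin.sum_univ_two]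
    rfl
  map_add' := by
    intro m n
    ext i j
    exact stmt3Phi_add α hα1 hαmul γ hγ1 hγmul hγmod hγinner g i j (m i j) (n i j)
  map_smul' := by
    intro c m
    ext i j
    exact stmt3Phi_smul α hα1 hαmul γ hγ1 hγmul hγmod hγinner g i j c (m i j)
  map_star' := by
    intro m
    ext i j
    show stmt3Phi α γ g i j ((star m) i j) = star (stmt3Theta α γ g m) i j
    rw [Matrix.star_apply, Matrix.star_apply]
    exact stmt3Phi_star α hα1 hαmul γ hγ1 hγmul hγmod hγinner g i j (m j i)

/-- the lower-right star algebra equivalence -/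
def stmt3DelEquiv (g : G) : A ≃⋆ₐ[ℂ] A where
  toFun := stmt3Del α γ g
  invFun := stmt3Del α γ g⁻¹
  left_inv := by
    intro x
    rw [← stmt3_dcomp α hα1 hαmul γ hγ1 hγmul hγmod hγinner, inv_mul_cancel,
      stmt3_d1 α hα1 hαmul γ hγ1 hγmul hγmod hγinner]
  right_inv := by
    intro x
    rw [← stmt3_dcomp α hα1 hαmul γ hγ1 hγmul hγmod hγinner, mul_inv_cancel,
      stmt3_d1 α hα1 hαmul γ hγ1 hγmul hγmod hγinner]
  map_mul' := stmt3_dmul α hα1 hαmul γ hγ1 hγmul hγmod hγinner g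
  map_add' := stmt3_dadd α hα1 hαmul γ hγ1 hγmul hγmod hγinner g
  map_smul' := fun c x => stmt3_dsmul α hα1 hαmul γ hγ1 hγmul hγmod hγinner g c x
  map_star' := fun x => stmt3_dstar α hα1 hαmul γ hγ1 hγmul hγmod hγinner g x


lemma stmt3Theta_std (g : G) (i0 j0 : Fin 2) (a : A) :
    stmt3Theta α γ g (single i0 j0 a) = single i0 j0 (stmt3Phi α γ g i0 j0 a) := by
  ext i j
  show stmt3Phi α γ g i j (single i0 j0 a i j)
      = single i0 j0 (stmt3Phi α γ g i0 j0 a) i j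
  by_cases h : i0 = i ∧ j0 = j
  · obtain ⟨rfl, rfl⟩ := h
    simp [single]
  · simp only [single, of_apply, if_neg h]
    exact stmt3Phi_zero α hα1 hαmul γ hγ1 hγmul hγmod hγinner g i j

lemma stmt3_phi00 (g : G) (a : A) : stmt3Phi α γ g 0 0 a = α g a := by simp [stmt3Phi]
lemma stmt3_phi01 (g : G) (a : A) : stmt3Phi α γ g 0 1 a = stmt3Beta γ g a := by
  simp [stmt3Phi]
lemma stmt3_phi10 (g : G) (a : A) : stmt3Phi α γ g 1 0 a = γ g a := by simp [stmt3Phi]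
lemma stmt3_phi11 (g : G) (a : A) : stmt3Phi α γ g 1 1 a = stmt3Del α γ g a := by
  simp [stmt3Phi]

lemma stmt3ThetaEquiv_apply (g : G) (m : Matrix (Fin 2) (Fin 2) A) :
    stmt3ThetaEquiv α hα1 hαmul γ hγ1 hγmul hγmod hγinner g m = stmt3Theta α γ g m := rfl

lemma stmt3DelEquiv_apply (g : G) (x : A) :
    stmt3DelEquiv α hα1 hαmul γ hγ1 hγmul hγmod hγinner g x = stmt3Del α γ g x := rfl

end Stmt3Aux

lemma stmt3_std_star {A : Type*} [NonUnitalCStarAlgebra A] (i j : Fin 2) (a : A) :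
    single i j (star a) = star (single j i a) := by
  ext k l
  simp only [single, of_apply, Matrix.star_apply]
  by_cases h : i = k ∧ j = l
  · obtain ⟨rfl, rfl⟩ := h
    simp
  · rw [if_neg h, if_neg (by tauto), star_zero]

lemma stmt3_matrix_decomp {A : Type*} [NonUnitalCStarAlgebra A] (m : Matrix (Fin 2) (Fin 2) A) :
    m = single 0 0 (m 0 0) + single 0 1 (m 0 1)
      + single 1 0 (m 1 0) + single 1 1 (m 1 1) := by
  ext i j
  fin_cases i <;> fin_cases j <;>
    simp [single, Matrix.add_apply]

/-- Given an action `α` of `G` on a C*-algebra `A` and a family `γ` of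
`ℂ`-linear maps on `A` which is multiplicative in `G`, unital at `1`, `α`-semilinear for the right
module structure and compatible with the inner product `⟨x, y⟩ = x* y`, there is an action `θ` on
`M₂(A)` together with an action `δ` on `A` satisfying the corner hypotheses for `(θ, α, δ)` and
having lower-left corner maps `γ`; moreover `θ` is unique with these properties. -/
theorem stmt_3 {G : Type*} [Group G] {A : Type*} [NonUnitalCStarAlgebra A]
    (α : G → (A ≃⋆ₐ[ℂ] A))
    (hα1 : ∀ x : A, α 1 x = x) (hαmul : ∀ (g h : G) (x : A), α (g * h) x = α g (α h x))
    (γ : G → (A →ₗ[ℂ] A))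
    (hγ1 : ∀ x : A, γ 1 x = x)
    (hγmul : ∀ (g h : G) (x : A), γ (g * h) x = γ g (γ h x))
    (hγmod : ∀ (g : G) (x a : A), γ g (x * a) = γ g x * α g a)
    (hγinner : ∀ (g : G) (x y : A), star (γ g x) * γ g y = α g (star x * y)) :
    ∃ θ : G → (Matrix (Fin 2) (Fin 2) A ≃⋆ₐ[ℂ] Matrix (Fin 2) (Fin 2) A),
      (∃ δ : G → (A ≃⋆ₐ[ℂ] A),
        (∀ x : A, δ 1 x = x) ∧ (∀ (g h : G) (x : A), δ (g * h) x = δ g (δ h x)) ∧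
        (∀ m, θ 1 m = m) ∧ (∀ (g h : G) m, θ (g * h) m = θ g (θ h m)) ∧
        (∀ (g : G) (a : A), θ g (single 0 0 a) = single 0 0 (α g a)) ∧
        (∀ (g : G) (a : A), θ g (single 1 1 a) = single 1 1 (δ g a)) ∧
        (∀ (g : G) (z : A), θ g (single 1 0 z) = single 1 0 (γ g z))) ∧
      (∀ θ' : G → (Matrix (Fin 2) (Fin 2) A ≃⋆ₐ[ℂ] Matrix (Fin 2) (Fin 2) A),
        (∃ δ' : G → (A ≃⋆ₐ[ℂ] A),
          (∀ x : A, δ' 1 x = x) ∧ (∀ (g h : G) (x : A), δ' (g * h) x = δ' g (δ' h x)) ∧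
          (∀ m, θ' 1 m = m) ∧ (∀ (g h : G) m, θ' (g * h) m = θ' g (θ' h m)) ∧
          (∀ (g : G) (a : A), θ' g (single 0 0 a) = single 0 0 (α g a)) ∧
          (∀ (g : G) (a : A), θ' g (single 1 1 a) = single 1 1 (δ' g a)) ∧
          (∀ (g : G) (z : A), θ' g (single 1 0 z) = single 1 0 (γ g z))) →
        θ' = θ) := by

  refine ⟨fun g => stmt3ThetaEquiv α hα1 hαmul γ hγ1 hγmul hγmod hγinner g,
    ⟨fun g => stmt3DelEquiv α hα1 hαmul γ hγ1 hγmul hγmod hγinner g,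
      fun x => stmt3_d1 α hα1 hαmul γ hγ1 hγmul hγmod hγinner x,
      fun g h x => stmt3_dcomp α hα1 hαmul γ hγ1 hγmul hγmod hγinner g h x,
      ?_, ?_, ?_, ?_, ?_⟩, ?_⟩
  · intro m
    ext i j
    exact stmt3Phi_one α hα1 hαmul γ hγ1 hγmul hγmod hγinner i j (m i j)
  · intro g h m
    ext i j
    exact stmt3Phi_comp α hα1 hαmul γ hγ1 hγmul hγmod hγinner g h i j (m i j)
  · intro g a
    rw [stmt3ThetaEquiv_apply, stmt3Theta_std α hα1 hαmul γ hγ1 hγmul hγmod hγinner,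
      stmt3_phi00 α hα1 hαmul γ hγ1 hγmul hγmod hγinner]
  · intro g a
    rw [stmt3ThetaEquiv_apply, stmt3Theta_std α hα1 hαmul γ hγ1 hγmul hγmod hγinner,
      stmt3_phi11 α hα1 hαmul γ hγ1 hγmul hγmod hγinner,
      stmt3DelEquiv_apply α hα1 hαmul γ hγ1 hγmul hγmod hγinner]
  · intro g z
    rw [stmt3ThetaEquiv_apply, stmt3Theta_std α hα1 hαmul γ hγ1 hγmul hγmod hγinner,
      stmt3_phi10 α hα1 hαmul γ hγ1 hγmul hγmod hγinner]
  · rintro θ' ⟨δ', hd1, hdmul, ht1, htmul, h00, h11, h10⟩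
    funext g
    have hδ : ∀ d : A, δ' g d = stmt3Del α γ g d := by
      intro d
      apply stmt3_sep α hα1 hαmul γ hγ1 hγmul hγmod hγinner g
      intro v
      have e1 : θ' g (single 1 1 d * single 1 0 v)
          = single 1 0 (δ' g d * γ g v) := by
        rw [_root_.map_mul, h11, h10, Matrix.single_mul_single_same]
      rw [Matrix.single_mul_single_same, h10] at e1
      have e2 := congrFun (congrFun e1 1) 0
      simp only [Matrix.single_apply_same] at e2
      rw [stmt3_dg α hα1 hαmul γ hγ1 hγmul hγmod hγinner]
      exact e2.symm
    have h01 : ∀ b : A, θ' g (single 0 1 b)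
        = single 0 1 (stmt3Beta γ g b) := by
      intro b
      have hb : (single 0 1 b : Matrix (Fin 2) (Fin 2) A)
          = star (single 1 0 (star b)) := by
        rw [← stmt3_std_star, star_star]
      rw [hb, map_star, h10, ← stmt3_std_star]
      rfl
    apply DFunLike.ext
    intro m
    have hm := stmt3_matrix_decomp m
    conv_lhs => rw [hm]
    conv_rhs => rw [hm]
    simp only [map_add]
    rw [h00, h10, h11, hδ, h01]
    rw [stmt3ThetaEquiv_apply, stmt3ThetaEquiv_apply, stmt3ThetaEquiv_apply,
      stmt3ThetaEquiv_apply,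
      stmt3Theta_std α hα1 hαmul γ hγ1 hγmul hγmod hγinner,
      stmt3Theta_std α hα1 hαmul γ hγ1 hγmul hγmod hγinner,
      stmt3Theta_std α hα1 hαmul γ hγ1 hγmul hγmod hγinner,
      stmt3Theta_std α hα1 hαmul γ hγ1 hγmul hγmod hγinner,
      stmt3_phi00 α hα1 hαmul γ hγ1 hγmul hγmod hγinner,
      stmt3_phi01 α hα1 hαmul γ hγ1 hγmul hγmod hγinner,
      stmt3_phi10 α hα1 hαmul γ hγ1 hγmul hγmod hγinner,
      stmt3_phi11 α hα1 hαmul γ hγ1 hγmul hγmod hγinner]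
end

section
/- Let G be a group, A a C*-algebra, and assume the corner hypotheses for (θ, α, δ) on M₂(A). For g ∈ G and z ∈ A let γ_g(z) denote the (2,1) entry of θ_g(e₂₁(z)). Then for each g ∈ G the map γ_g : A → A is a bijective, isometric, ℂ-linear map satisfying, for all x, y, a ∈ A: γ_g(x·a) = γ_g(x)·α_g(a); γ_g(a·x) = δ_g(a)·γ_g(x); (γ_g(x))*·γ_g(y) = α_g(x*·y); and γ_g(x)·(γ_g(y))* = δ_g(x·y*). (That is, γ_g is an automorphism of A viewed as an imprimitivity Hilbert bimodule, covering δ_g on the left and α_g on the right, where the right inner product is ⟨a,b⟩ = a*b and the left one is ⟨a,b⟩ = ab*.) -/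
open Matrix

/-- Under the corner hypotheses for `(θ, α, δ)` on `M₂(A)`, the lower-left
corner maps `γ_g` are bijective isometric `ℂ`-linear maps satisfying the bimodule and
imprimitivity-bimodule inner-product identities covering `δ_g` on the left and `α_g` on the
right. -/
theorem stmt_4 {G : Type*} [Group G] {A : Type*} [NonUnitalCStarAlgebra A]
    (α δ : G → (A ≃⋆ₐ[ℂ] A))
    (hα1 : ∀ x : A, α 1 x = x) (hαmul : ∀ (g h : G) (x : A), α (g * h) x = α g (α h x))
    (hδ1 : ∀ x : A, δ 1 x = x) (hδmul : ∀ (g h : G) (x : A), δ (g * h) x = δ g (δ h x))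
    (θ : G → (Matrix (Fin 2) (Fin 2) A ≃⋆ₐ[ℂ] Matrix (Fin 2) (Fin 2) A))
    (hθ1 : ∀ m, θ 1 m = m) (hθmul : ∀ (g h : G) m, θ (g * h) m = θ g (θ h m))
    (hc11 : ∀ (g : G) (a : A), θ g (single 0 0 a) = single 0 0 (α g a))
    (hc22 : ∀ (g : G) (a : A), θ g (single 1 1 a) = single 1 1 (δ g a))
    (γ : G → A → A)
    (hγ : ∀ (g : G) (z : A), γ g z = θ g (single 1 0 z) 1 0) :
    ∀ g : G,
      Function.Bijective (γ g) ∧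
      (∀ x : A, ‖γ g x‖ = ‖x‖) ∧
      (∀ x y : A, γ g (x + y) = γ g x + γ g y) ∧
      (∀ (c : ℂ) (x : A), γ g (c • x) = c • γ g x) ∧
      (∀ x a : A, γ g (x * a) = γ g x * α g a) ∧
      (∀ a x : A, γ g (a * x) = δ g a * γ g x) ∧
      (∀ x y : A, star (γ g x) * γ g y = α g (star x * y)) ∧
      (∀ x y : A, γ g x * star (γ g y) = δ g (x * star y)) := by
  -- The key fact: `θ g` preserves the lower-left corner.
  have key : ∀ (g : G) (z : A),
      θ g (single 1 0 z) = single 1 0 (γ g z) := by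
    intro g z
    set m := θ g (single 1 0 z) with hm
    have h1 : ∀ b : A, single (0 : Fin 2) (0 : Fin 2) b * m = 0 := by
      intro b
      obtain ⟨a, rfl⟩ := (α g).surjective b
      calc single (0 : Fin 2) (0 : Fin 2) ((α g) a) * m
          = θ g (single (0 : Fin 2) (0 : Fin 2) a * single (1 : Fin 2) (0 : Fin 2) z) := by
            rw [_root_.map_mul, hc11]
        _ = 0 := by
            have h0 : single (0 : Fin 2) (0 : Fin 2) a
                * single (1 : Fin 2) (0 : Fin 2) z = 0 :=
              single_mul_single_of_ne _ _ _ _ (by decide) _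
            rw [h0, map_zero]
    have h2 : ∀ b : A, m * single (1 : Fin 2) (1 : Fin 2) b = 0 := by
      intro b
      obtain ⟨a, rfl⟩ := (δ g).surjective b
      calc m * single (1 : Fin 2) (1 : Fin 2) ((δ g) a)
          = θ g (single (1 : Fin 2) (0 : Fin 2) z * single (1 : Fin 2) (1 : Fin 2) a) := by
            rw [_root_.map_mul, hc22]
        _ = 0 := by
            have h0 : single (1 : Fin 2) (0 : Fin 2) z
                * single (1 : Fin 2) (1 : Fin 2) a = 0 :=
              single_mul_single_of_ne _ _ _ _ (by decide) _
            rw [h0, map_zero]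
    have h00 : m 0 0 = 0 := by
      have h := congrFun (congrFun (h1 (star (m 0 0))) 0) 0
      simp only [single_mul_apply_same, Matrix.zero_apply] at h
      exact CStarRing.star_mul_self_eq_zero_iff _ |>.mp h
    have h01 : m 0 1 = 0 := by
      have h := congrFun (congrFun (h1 (star (m 0 1))) 0) 1
      simp only [single_mul_apply_same, Matrix.zero_apply] at h
      exact CStarRing.star_mul_self_eq_zero_iff _ |>.mp h
    have h11 : m 1 1 = 0 := by
      have h := congrFun (congrFun (h2 (star (m 1 1))) 1) 1
      simp only [Matrix.mul_apply, Fin.sum_univ_two, Matrix.single, Matrix.of_apply,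
        Matrix.zero_apply, if_pos, and_self, mul_zero, zero_add, add_zero,
        Fin.one_eq_zero_iff, Fin.zero_eq_one_iff] at h
      simpa using h
    have hz : γ g z = m 1 0 := hγ g z
    ext i j
    fin_cases i <;> fin_cases j <;>
      simp [h00, h01, h11, hz, single_apply_same,
        single_apply_of_ne, Matrix.single]
  -- basic consequences
  intro g
  have hradd : ∀ x y : A, γ g (x + y) = γ g x + γ g y := by
    intro x y
    have : θ g (single 1 0 (x + y))
        = single 1 0 (γ g x) + single 1 0 (γ g y) := by
      rw [single_add, map_add, key, key]
    rw [hγ, this]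
    simp
  have hrsmul : ∀ (c : ℂ) (x : A), γ g (c • x) = c • γ g x := by
    intro c x
    have : θ g (single 1 0 (c • x)) = c • single 1 0 (γ g x) := by
      rw [← smul_single, _root_.map_smul, key]
    rw [hγ, this]
    simp
  have hrmul : ∀ x a : A, γ g (x * a) = γ g x * α g a := by
    intro x a
    have : θ g (single 1 0 (x * a)) = single 1 0 (γ g x * α g a) := by
      rw [← single_mul_single_same x (1 : Fin 2) (0 : Fin 2) (0 : Fin 2) a, _root_.map_mul, key, hc11,
        single_mul_single_same]
    rw [hγ, this]
    simp
  have hlmul : ∀ a x : A, γ g (a * x) = δ g a * γ g x := by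
    intro a x
    have : θ g (single 1 0 (a * x)) = single 1 0 (δ g a * γ g x) := by
      rw [← single_mul_single_same a (1 : Fin 2) (1 : Fin 2) (0 : Fin 2) x, _root_.map_mul, key, hc22,
        single_mul_single_same]
    rw [hγ, this]
    simp
  have hstarbasis : ∀ w : A,
      star (single (1 : Fin 2) (0 : Fin 2) w) = single (0 : Fin 2) (1 : Fin 2) (star w) := by
    intro w
    ext i j
    fin_cases i <;> fin_cases j <;>
      simp [Matrix.star_apply, Matrix.single]
  have hinner : ∀ x y : A, star (γ g x) * γ g y = α g (star x * y) := by
    intro x y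
    have : θ g (single 0 0 (star x * y))
        = single 0 0 (star (γ g x) * γ g y) := by
      rw [← single_mul_single_same (star x) (0 : Fin 2) (1 : Fin 2) (0 : Fin 2) y,
        ← hstarbasis, _root_.map_mul, map_star, key, key, hstarbasis,
        single_mul_single_same]
    rw [hc11] at this
    have h := congrFun (congrFun this 0) 0
    simpa using h.symm
  have hinner' : ∀ x y : A, γ g x * star (γ g y) = δ g (x * star y) := by
    intro x y
    have : θ g (single 1 1 (x * star y))
        = single 1 1 (γ g x * star (γ g y)) := by
      rw [← single_mul_single_same x (1 : Fin 2) (0 : Fin 2) (1 : Fin 2) (star y),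
        ← hstarbasis, _root_.map_mul, map_star, key, key, hstarbasis,
        single_mul_single_same]
    rw [hc22] at this
    have h := congrFun (congrFun this 1) 1
    simpa using h.symm
  have hnorm : ∀ x : A, ‖γ g x‖ = ‖x‖ := by
    intro x
    have h := congrArg norm (hinner x x)
    rw [CStarRing.norm_star_mul_self] at h
    have hα : ‖(α g) (star x * x)‖ = ‖star x * x‖ :=
      NonUnitalStarAlgHom.norm_map (α g) (α g).injective _
    rw [hα, CStarRing.norm_star_mul_self] at h
    exact (mul_self_inj_of_nonneg (norm_nonneg _) (norm_nonneg _)).mp h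
  have hbij : Function.Bijective (γ g) := by
    have hli : ∀ z : A, γ g⁻¹ (γ g z) = z := by
      intro z
      rw [hγ, ← key, ← hθmul, inv_mul_cancel, hθ1]
      simp
    have hri : ∀ z : A, γ g (γ g⁻¹ z) = z := by
      intro z
      rw [hγ, ← key, ← hθmul, mul_inv_cancel, hθ1]
      simp
    exact Function.bijective_iff_has_inverse.mpr ⟨γ g⁻¹, hli, hri⟩
  exact ⟨hbij, hnorm, hradd, hrsmul, hrmul, hlmul, hinner, hinner'⟩
end

section
/- Let G be a group, A a C*-algebra, and assume the corner hypotheses for (θ, α, δ) on M₂(A). Let I ⊆ A be a closed two-sided ideal such that α_g(I) ⊆ I for all g ∈ G. Then for every g ∈ G, θ_g maps M₂(I) (the set of 2×2 matrices all of whose entries lie in I) into M₂(I). -/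
open Matrix

set_option maxHeartbeats 1000000

open Unitization in
lemma core_bound {A : Type*} [NonUnitalCStarAlgebra A] (x q : A) (s : ℝ) (hs : 0 < s) :
    ‖x - x * ((star x * x + star q * q) *
      cfcₙ (fun t : ℝ => t / (t ^ 2 + s)) (star x * x + star q * q))‖ ^ 2 ≤ Real.sqrt s / 2 := by
  set b := star x * x with hb_def
  set a := star x * x + star q * q with ha_def
  have hb : IsSelfAdjoint b := IsSelfAdjoint.star_mul_self x
  have ha : IsSelfAdjoint a := hb.add (IsSelfAdjoint.star_mul_self q)
  set f : ℝ → ℝ := fun t => t ^ 2 / (t ^ 2 + s) with hf_def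
  have hden : ∀ t : ℝ, t ^ 2 + s ≠ 0 := fun t => by positivity
  have hcont : Continuous f := Continuous.div (by fun_prop) (by fun_prop) hden
  have hcont' : Continuous fun t : ℝ => t / (t ^ 2 + s) :=
    Continuous.div (by fun_prop) (by fun_prop) hden
  have hf0 : f 0 = 0 := by simp [hf_def]
  set u := cfcₙ f a with hu_def
  have hu_sa : IsSelfAdjoint u := cfcₙ_predicate f a
  have hmul : a * cfcₙ (fun t : ℝ => t / (t ^ 2 + s)) a = u := by
    rw [hu_def]
    have : f = fun t : ℝ => t * (t / (t ^ 2 + s)) := by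
      funext t; rw [hf_def]; simp [pow_two, mul_div_assoc]
    rw [this, cfcₙ_mul _ _ a (by exact continuousOn_id) (by simp)
      (hcont'.continuousOn) (by simp), cfcₙ_id' ℝ a]
  rw [hmul]
  have expand : star (x - x * u) * (x - x * u) = b - b * u - u * b + u * (b * u) := by
    rw [star_sub, StarMul.star_mul, hu_sa.star_eq, hb_def]
    noncomm_ring
  have hbu : (b : Unitization ℂ A) ≤ (a : Unitization ℂ A) := by
    rw [← sub_nonneg]
    have : (a : Unitization ℂ A) - (b : Unitization ℂ A)
        = star (q : Unitization ℂ A) * (q : Unitization ℂ A) := by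
      rw [← inr_sub ℂ, ha_def, ← inr_star, ← inr_mul]
      congr 1
      abel
    rw [this]
    exact star_mul_self_nonneg _
  have hbpos : (0 : Unitization ℂ A) ≤ (b : Unitization ℂ A) := by
    have : (b : Unitization ℂ A) = star (x : Unitization ℂ A) * (x : Unitization ℂ A) := by
      rw [hb_def, ← inr_star, ← inr_mul]
    rw [this]
    exact star_mul_self_nonneg _
  have conj_ineq : ‖b - b * u - u * b + u * (b * u)‖ ≤ ‖a - a * u - u * a + u * (a * u)‖ := by
    set w : Unitization ℂ A := 1 - (u : Unitization ℂ A) with hw_def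
    have hw : star w = w := by
      rw [hw_def, star_sub, star_one, ← inr_star, hu_sa.star_eq]
    have e : ∀ c : A, ((c - c * u - u * c + u * (c * u) : A) : Unitization ℂ A)
        = star w * (c : Unitization ℂ A) * w := by
      intro c
      rw [hw, hw_def]
      simp only [inr_sub ℂ, inr_add ℂ, inr_mul]
      noncomm_ring
    rw [← norm_inr (𝕜 := ℂ) (b - b * u - u * b + u * (b * u)),
      ← norm_inr (𝕜 := ℂ) (a - a * u - u * a + u * (a * u)), e b, e a]
    exact CStarAlgebra.norm_le_norm_of_nonneg_of_le (star_left_conjugate_nonneg hbpos w) (star_left_conjugate_le_conjugate hbu w)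
  have c1 : cfcₙ (fun t : ℝ => t * f t) a = a * u := by
    rw [cfcₙ_mul (fun t : ℝ => t) f a continuousOn_id (by simp) hcont.continuousOn (by simp [hf0]),
      cfcₙ_id' ℝ a]
  have c2 : cfcₙ (fun t : ℝ => f t * t) a = u * a := by
    rw [cfcₙ_mul f (fun t : ℝ => t) a hcont.continuousOn (by simp [hf0]) continuousOn_id (by simp),
      cfcₙ_id' ℝ a]
  have c3 : cfcₙ (fun t : ℝ => f t * (t * f t)) a = u * (a * u) := by
    rw [cfcₙ_mul f (fun t : ℝ => t * f t) a hcont.continuousOn (by simp [hf0])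
      (by exact (continuous_id.mul hcont).continuousOn) (by simp [hf0]), c1]
  have c4 : cfcₙ (fun t : ℝ => t - t * f t) a = a - a * u := by
    rw [cfcₙ_sub (fun t : ℝ => t) (fun t : ℝ => t * f t) a continuousOn_id (by simp)
      (by exact (continuous_id.mul hcont).continuousOn) (by simp [hf0]), cfcₙ_id' ℝ a, c1]
  have c5 : cfcₙ (fun t : ℝ => t - t * f t - f t * t) a = a - a * u - u * a := by
    rw [cfcₙ_sub (fun t : ℝ => t - t * f t) (fun t : ℝ => f t * t) a
      (by exact (continuous_id.sub (continuous_id.mul hcont)).continuousOn) (by simp [hf0])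
      (by exact (hcont.mul continuous_id).continuousOn) (by simp [hf0]), c4, c2]
  have c6 : cfcₙ (fun t : ℝ => t - t * f t - f t * t + f t * (t * f t)) a
      = a - a * u - u * a + u * (a * u) := by
    rw [cfcₙ_add (fun t : ℝ => t - t * f t - f t * t) (fun t : ℝ => f t * (t * f t)) a
      (by exact ((continuous_id.sub (continuous_id.mul hcont)).sub
        (hcont.mul continuous_id)).continuousOn) (by simp [hf0])
      (by exact (hcont.mul (continuous_id.mul hcont)).continuousOn) (by simp [hf0]), c5, c3]
  have hbound : ∀ t ∈ quasispectrum ℝ a,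
      ‖t - t * f t - f t * t + f t * (t * f t)‖ ≤ Real.sqrt s / 2 := by
    intro t _
    have ht : (0:ℝ) < t ^ 2 + s := by positivity
    have e : t - t * f t - f t * t + f t * (t * f t) = t * (s / (t ^ 2 + s)) ^ 2 := by
      simp only [hf_def]
      field_simp
      ring
    rw [e, Real.norm_eq_abs]
    set r := Real.sqrt s with hrdef
    have hr : r ^ 2 = s := Real.sq_sqrt hs.le
    have hr0 : 0 < r := Real.sqrt_pos.mpr hs
    have habs : |t * (s / (t ^ 2 + s)) ^ 2| = |t| * (s / (t ^ 2 + s)) ^ 2 := by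
      rw [abs_mul, abs_pow, abs_of_nonneg (div_nonneg hs.le ht.le)]
    rw [habs, div_pow, ← mul_div_assoc, div_le_div_iff₀ (by positivity) two_pos]
    have k1 : 2 * |t| * r ≤ t ^ 2 + s := by nlinarith [sq_nonneg (|t| - r), sq_abs t]
    have h5 : (2 * |t| * r) * (r * (t ^ 2 + s)) ≤ (t ^ 2 + s) * (r * (t ^ 2 + s)) :=
      mul_le_mul_of_nonneg_right k1 (by positivity)
    have k2 : 2 * |t| * s * (t ^ 2 + s) ≤ r * (t ^ 2 + s) ^ 2 := by
      calc 2 * |t| * s * (t ^ 2 + s) = (2 * |t| * r) * (r * (t ^ 2 + s)) := by rw [← hr]; ring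
        _ ≤ (t ^ 2 + s) * (r * (t ^ 2 + s)) := h5
        _ = r * (t ^ 2 + s) ^ 2 := by ring
    have k3 : 2 * |t| * s * s ≤ 2 * |t| * s * (t ^ 2 + s) :=
      mul_le_mul_of_nonneg_left (le_add_of_nonneg_left (sq_nonneg t)) (by positivity)
    have k4 : |t| * s ^ 2 * 2 = 2 * |t| * s * s := by ring
    linarith [k2, k3]
  calc ‖x - x * u‖ ^ 2 = ‖star (x - x * u) * (x - x * u)‖ := by
        rw [sq, CStarRing.norm_star_mul_self]
    _ = ‖b - b * u - u * b + u * (b * u)‖ := by rw [expand]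
    _ ≤ ‖a - a * u - u * a + u * (a * u)‖ := conj_ineq
    _ = ‖cfcₙ (fun t : ℝ => t - t * f t - f t * t + f t * (t * f t)) a‖ := by rw [c6]
    _ ≤ Real.sqrt s / 2 := norm_cfcₙ_le hbound

section IdealLemmas

variable {A : Type*} [NonUnitalCStarAlgebra A]

lemma exists_approx (x q : A) {ε : ℝ} (hε : 0 < ε) :
    ∃ c : A, ‖x - x * ((star x * x + star q * q) * c)‖ < ε := by
  refine ⟨cfcₙ (fun t : ℝ => t / (t ^ 2 + ε ^ 4)) (star x * x + star q * q), ?_⟩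
  have hs : (0:ℝ) < ε ^ 4 := by positivity
  have h := core_bound x q (ε ^ 4) hs
  have hsqrt : Real.sqrt (ε ^ 4) = ε ^ 2 := by
    rw [show ε ^ 4 = (ε ^ 2) ^ 2 by ring, Real.sqrt_sq (by positivity)]
  rw [hsqrt] at h
  have h2 : ‖x - x * ((star x * x + star q * q) *
      cfcₙ (fun t : ℝ => t / (t ^ 2 + ε ^ 4)) (star x * x + star q * q))‖ ^ 2 < ε ^ 2 := by
    calc _ ≤ ε ^ 2 / 2 := h
      _ < ε ^ 2 := by linarith [sq_nonneg ε, hε, mul_pos hε hε]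
  exact lt_of_pow_lt_pow_left₀ 2 hε.le h2

variable (I : TwoSidedIdeal A) (hI : IsClosed (I : Set A))

include hI in
lemma mem_of_sum_squares {p q : A} (h : star p * p + star q * q ∈ I) : p ∈ I := by
  have : p ∈ closure (I : Set A) := by
    rw [Metric.mem_closure_iff]
    intro ε hε
    obtain ⟨c, hc⟩ := exists_approx p q hε
    exact ⟨p * ((star p * p + star q * q) * c),
      I.mul_mem_left _ _ (I.mul_mem_right _ _ h), by rwa [dist_eq_norm]⟩
  rwa [hI.closure_eq] at this

include hI in
lemma pair_mem_of_sum_squares {p q : A} (h : star p * p + star q * q ∈ I) :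
    p ∈ I ∧ q ∈ I :=
  ⟨mem_of_sum_squares I hI h, mem_of_sum_squares I hI (by rwa [add_comm] at h)⟩

include hI in
lemma star_mem_of_mem {x : A} (hx : x ∈ I) : star x ∈ I := by
  refine mem_of_sum_squares I hI (p := star x) (q := star x) ?_
  rw [star_star]
  exact I.add_mem (I.mul_mem_right _ _ hx) (I.mul_mem_right _ _ hx)

include hI in
lemma pair_mem_of_sum_squares' {p q : A} (h : p * star p + q * star q ∈ I) :
    p ∈ I ∧ q ∈ I := by
  have h' : star (star p) * star p + star (star q) * star q ∈ I := by
    rwa [star_star, star_star]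
  obtain ⟨h1, h2⟩ := pair_mem_of_sum_squares I hI h'
  exact ⟨by simpa using star_mem_of_mem I hI h1, by simpa using star_mem_of_mem I hI h2⟩

end IdealLemmas

/-- Under the corner hypotheses for `(θ, α, δ)` on `M₂(A)`, if `I` is a closed
two-sided ideal of `A` invariant under `α`, then every `θ_g` maps matrices with entries in `I`
to matrices with entries in `I`. -/
theorem stmt_7 {G : Type*} [Group G] {A : Type*} [NonUnitalCStarAlgebra A]
    (α δ : G → (A ≃⋆ₐ[ℂ] A))
    (hα1 : ∀ x : A, α 1 x = x) (hαmul : ∀ (g h : G) (x : A), α (g * h) x = α g (α h x))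
    (hδ1 : ∀ x : A, δ 1 x = x) (hδmul : ∀ (g h : G) (x : A), δ (g * h) x = δ g (δ h x))
    (θ : G → (Matrix (Fin 2) (Fin 2) A ≃⋆ₐ[ℂ] Matrix (Fin 2) (Fin 2) A))
    (hθ1 : ∀ m, θ 1 m = m) (hθmul : ∀ (g h : G) m, θ (g * h) m = θ g (θ h m))
    (hc11 : ∀ (g : G) (a : A), θ g (Matrix.single 0 0 a) = Matrix.single 0 0 (α g a))
    (hc22 : ∀ (g : G) (a : A), θ g (Matrix.single 1 1 a) = Matrix.single 1 1 (δ g a))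
    (I : TwoSidedIdeal A) (hIclosed : IsClosed (I : Set A))
    (hIinv : ∀ (g : G) (a : A), a ∈ I → α g a ∈ I) :
    ∀ (g : G) (m : Matrix (Fin 2) (Fin 2) A),
      (∀ k l, m k l ∈ I) → ∀ k l, θ g m k l ∈ I := by
  intro g m hm
  have hstar_std : ∀ (i j : Fin 2) (a : A),
      star (Matrix.single i j a) = Matrix.single j i (star a) := by
    intro i j a
    ext k l
    simp only [Matrix.star_apply, Matrix.single, Matrix.of_apply,
      apply_ite (star : A → A), star_zero]
    by_cases h1 : j = k <;> by_cases h2 : i = l <;> simp [h1, h2]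
  have std_entry_mem : ∀ (i j : Fin 2) (c : A), c ∈ I →
      ∀ k l, Matrix.single i j c k l ∈ I := by
    intro i j c hc k l
    simp only [Matrix.single, Matrix.of_apply]
    split_ifs
    exacts [hc, I.zero_mem]
  -- entries of θ g (e₁₂ a) lie in I
  have entries01 : ∀ a : A, a ∈ I → ∀ k l, (θ g (Matrix.single 0 1 a)) k l ∈ I := by
    intro a ha
    set y := θ g (Matrix.single 0 1 a) with hy
    have hyy : y * star y = Matrix.single 0 0 (α g (a * star a)) := by
      rw [hy, ← map_star, ← _root_.map_mul, hstar_std, Matrix.single_mul_single_same, hc11]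
    have h00 : y 0 0 * star (y 0 0) + y 0 1 * star (y 0 1) ∈ I := by
      have h := congrFun (congrFun hyy 0) 0
      rw [Matrix.mul_apply, Fin.sum_univ_two] at h
      simp only [Matrix.star_apply] at h
      simp only [Matrix.single, Matrix.of_apply] at h
      norm_num at h
      rw [h, ← _root_.map_mul]
      exact hIinv g _ (I.mul_mem_right _ _ ha)
    have h11 : y 1 0 * star (y 1 0) + y 1 1 * star (y 1 1) ∈ I := by
      have h := congrFun (congrFun hyy 1) 1
      rw [Matrix.mul_apply, Fin.sum_univ_two] at h
      simp only [Matrix.star_apply] at h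
      simp only [Matrix.single, Matrix.of_apply] at h
      norm_num at h
      rw [h]
      exact I.zero_mem
    obtain ⟨m1, m2⟩ := pair_mem_of_sum_squares' I hIclosed h00
    obtain ⟨m3, m4⟩ := pair_mem_of_sum_squares' I hIclosed h11
    intro k l
    fin_cases k <;> fin_cases l <;> assumption
  -- entries of θ g (e₂₁ a) lie in I
  have entries10 : ∀ a : A, a ∈ I → ∀ k l, (θ g (Matrix.single 1 0 a)) k l ∈ I := by
    intro a ha
    set z := θ g (Matrix.single 1 0 a) with hz
    have hzz : star z * z = Matrix.single 0 0 (α g (star a * a)) := by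
      rw [hz, ← map_star, ← _root_.map_mul, hstar_std, Matrix.single_mul_single_same, hc11]
    have h00 : star (z 0 0) * z 0 0 + star (z 1 0) * z 1 0 ∈ I := by
      have h := congrFun (congrFun hzz 0) 0
      rw [Matrix.mul_apply, Fin.sum_univ_two] at h
      simp only [Matrix.star_apply] at h
      simp only [Matrix.single, Matrix.of_apply] at h
      norm_num at h
      rw [h, ← _root_.map_mul]
      exact hIinv g _ (I.mul_mem_left _ _ ha)
    have h11 : star (z 0 1) * z 0 1 + star (z 1 1) * z 1 1 ∈ I := by
      have h := congrFun (congrFun hzz 1) 1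
      rw [Matrix.mul_apply, Fin.sum_univ_two] at h
      simp only [Matrix.star_apply] at h
      simp only [Matrix.single, Matrix.of_apply] at h
      norm_num at h
      rw [h]
      exact I.zero_mem
    obtain ⟨m1, m2⟩ := pair_mem_of_sum_squares I hIclosed h00
    obtain ⟨m3, m4⟩ := pair_mem_of_sum_squares I hIclosed h11
    intro k l
    fin_cases k <;> fin_cases l <;> assumption
  -- δ-invariance of I
  have delta_mem : ∀ a : A, a ∈ I → δ g a ∈ I := by
    have hsq : ∀ c : A, c ∈ I → δ g (star c * c) ∈ I := by
      intro c hc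
      set y := θ g (Matrix.single 0 1 c) with hy
      have hyy : star y * y = Matrix.single 1 1 (δ g (star c * c)) := by
        rw [hy, ← map_star, ← _root_.map_mul, hstar_std, Matrix.single_mul_single_same, hc22]
      have h := congrFun (congrFun hyy 1) 1
      rw [Matrix.mul_apply, Fin.sum_univ_two] at h
      simp only [Matrix.star_apply] at h
      simp only [Matrix.single, Matrix.of_apply] at h
      norm_num at h
      rw [show (δ g) (star c * c) = δ g (star c) * δ g c from _root_.map_mul _ _ _, ← h]
      exact I.add_mem (I.mul_mem_left _ _ (entries01 c hc 0 1))
        (I.mul_mem_left _ _ (entries01 c hc 1 1))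
    intro a ha
    refine (pair_mem_of_sum_squares I hIclosed (p := δ g a) (q := δ g a) ?_).1
    have h : star (δ g a) * δ g a = δ g (star a * a) := by rw [← map_star, ← _root_.map_mul]
    rw [h]
    exact I.add_mem (hsq a ha) (hsq a ha)
  intro k l
  have hdecomp : θ g m = ∑ i : Fin 2, ∑ j : Fin 2, θ g (Matrix.single i j (m i j)) := by
    conv_lhs => rw [matrix_eq_sum_single m]
    simp only [map_sum]
  rw [hdecomp]
  simp only [Matrix.sum_apply]
  refine sum_mem fun i _ => sum_mem fun j _ => ?_
  fin_cases i <;> fin_cases j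
  · show (θ g) (Matrix.single 0 0 (m 0 0)) k l ∈ I
    rw [hc11]; exact std_entry_mem _ _ _ (hIinv g _ (hm 0 0)) k l
  · show (θ g) (Matrix.single 0 1 (m 0 1)) k l ∈ I
    exact entries01 _ (hm 0 1) k l
  · show (θ g) (Matrix.single 1 0 (m 1 0)) k l ∈ I
    exact entries10 _ (hm 1 0) k l
  · show (θ g) (Matrix.single 1 1 (m 1 1)) k l ∈ I
    rw [hc22]; exact std_entry_mem _ _ _ (delta_mem _ (hm 1 1)) k l
end

section
/- Let A, B, M be C*-algebras, j : B → M an injective ⋆-homomorphism whose range is a two-sided ideal of M, f : M → A a ⋆-homomorphism, and s : A → M a ⋆-homomorphism with f ∘ s = id_A, and suppose only range(j) ⊆ ker(f) (the sequence need not be exact in the middle). Then N := range(j) + range(s) = {j(b) + s(a) : b ∈ B, a ∈ A} is a closed ⋆-subalgebra of M, and restricting to N repairs exactness: j maps B into N, s maps A into N, the restriction of f to N is surjective onto A, range(j) = {x ∈ N : f(x) = 0}, and f ∘ s = id_A; i.e. 0 → B → N → A → 0 is a split exact sequence with split s. -/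
/-- If `j : B → M` is an injective ⋆-homomorphism with two-sided ideal range,
`f : M → A` a ⋆-homomorphism and `s : A → M` a split for `f` with merely `range j ⊆ ker f`, then
`N := j(B) + s(A)` is a closed ⋆-subalgebra of `M` on which exactness is repaired:
`0 → B → N → A → 0` is split exact with split `s`. -/
theorem stmt_18 {A B M : Type*}
    [NonUnitalCStarAlgebra A] [NonUnitalCStarAlgebra B] [NonUnitalCStarAlgebra M]
    (j : B →⋆ₙₐ[ℂ] M) (hj : Function.Injective j)
    (hIdeal : ∀ x m : M, x ∈ Set.range j → m * x ∈ Set.range j ∧ x * m ∈ Set.range j)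
    (f : M →⋆ₙₐ[ℂ] A) (s : A →⋆ₙₐ[ℂ] M) (hs : ∀ a, f (s a) = a)
    (hker : ∀ b : B, f (j b) = 0)
    (N : Set M) (hN : N = {x : M | ∃ b a, x = j b + s a}) :
    IsClosed N ∧
    (∃ T : NonUnitalStarSubalgebra ℂ M, (T : Set M) = N) ∧
    (∀ b, j b ∈ N) ∧
    (∀ a, s a ∈ N) ∧
    (∀ a, ∃ x ∈ N, f x = a) ∧
    (Set.range j = {x ∈ N | f x = 0}) ∧
    (∀ a, f (s a) = a) := by
  subst hN
  -- N is the preimage of `range j` under the continuous map `x ↦ x - s (f x)`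
  have hNdesc : {x : M | ∃ b a, x = j b + s a} = (fun x : M => x - s (f x)) ⁻¹' Set.range j := by
    ext x
    constructor
    · rintro ⟨b, a, rfl⟩
      simp only [Set.mem_preimage, map_add, hker, hs, zero_add]
      exact ⟨b, by abel⟩
    · rintro ⟨b, hb⟩
      exact ⟨b, f x, by rw [hb, sub_add_cancel]⟩
  have hclosed : IsClosed {x : M | ∃ b a, x = j b + s a} := by
    rw [hNdesc]
    have hiso : Isometry j := NonUnitalStarAlgHom.isometry j hj
    have hfc : Continuous f := AddMonoidHomClass.continuous_of_bound f 1
      (by simpa only [one_mul] using NonUnitalStarAlgHom.norm_apply_le f)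
    have hsc : Continuous s := AddMonoidHomClass.continuous_of_bound s 1
      (by simpa only [one_mul] using NonUnitalStarAlgHom.norm_apply_le s)
    exact (hiso.isClosedEmbedding.isClosed_range).preimage
      (continuous_id.sub (hsc.comp hfc))
  refine ⟨hclosed, ?_, ?_, ?_, ?_, ?_, hs⟩
  · -- subalgebra structure
    refine ⟨{ carrier := {x : M | ∃ b a, x = j b + s a}
              add_mem' := ?_
              zero_mem' := ⟨0, 0, by simp⟩
              mul_mem' := ?_
              smul_mem' := ?_
              star_mem' := ?_ }, rfl⟩
    · rintro x y ⟨b, a, rfl⟩ ⟨b', a', rfl⟩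
      exact ⟨b + b', a + a', by simp only [map_add]; abel⟩
    · rintro x y ⟨b, a, rfl⟩ ⟨b', a', rfl⟩
      obtain ⟨b1, hb1⟩ := (hIdeal (j b') (j b) ⟨b', rfl⟩).1
      obtain ⟨b2, hb2⟩ := (hIdeal (j b') (s a) ⟨b', rfl⟩).1
      obtain ⟨b3, hb3⟩ := (hIdeal (j b) (s a') ⟨b, rfl⟩).2
      refine ⟨b1 + b2 + b3, a * a', ?_⟩
      rw [add_mul, mul_add, mul_add, map_add, map_add, hb1, hb2, hb3, map_mul s]
      abel
    · rintro c x ⟨b, a, rfl⟩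
      exact ⟨c • b, c • a, by simp [smul_add]⟩
    · rintro x ⟨b, a, rfl⟩
      exact ⟨star b, star a, by simp [star_add, map_star]⟩
  · exact fun b => ⟨b, 0, by simp⟩
  · exact fun a => ⟨0, a, by simp⟩
  · exact fun a => ⟨s a, ⟨0, a, by simp⟩, hs a⟩
  · ext x
    constructor
    · rintro ⟨b, rfl⟩
      exact ⟨⟨b, 0, by simp⟩, hker b⟩
    · rintro ⟨⟨b, a, rfl⟩, hx⟩
      simp only [map_add, hker, hs, zero_add] at hx
      exact ⟨b, by rw [hx]; simp⟩
end

section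
/- Let G be a group, A a C*-algebra, and assume the corner hypotheses for (θ, α, δ) on M₂(A). For g ∈ G let β_g(y) denote the (1,2) entry of θ_g(e₁₂(y)) and γ_g(z) the (2,1) entry of θ_g(e₂₁(z)). Then for all g ∈ G and all x, x′, y, y′, z, z′, w, w′ ∈ A the following identities hold: α_g(x)·x′ = α_g(x·α_{g⁻¹}(x′)); β_g(y)·y′ = α_g(y·γ_{g⁻¹}(y′)); γ_g(z)·z′ = γ_g(z·α_{g⁻¹}(z′)); and δ_g(w)·w′ = γ_g(w·γ_{g⁻¹}(w′)). -/
open Matrix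

private lemma aux_right_ann {A : Type*} [NonUnitalCStarAlgebra A] (a : A)
    (h : ∀ c : A, a * c = 0) : a = 0 :=
  (CStarRing.mul_star_self_eq_zero_iff a).mp (h (star a))

private lemma aux_left_ann {A : Type*} [NonUnitalCStarAlgebra A] (a : A)
    (h : ∀ c : A, c * a = 0) : a = 0 :=
  (CStarRing.star_mul_self_eq_zero_iff a).mp (h (star a))

/-- Under the corner hypotheses for `(θ, α, δ)` on `M₂(A)`, with `β_g` and
`γ_g` the off-diagonal corner maps of `θ_g`, the following identities hold:
`α_g(x)·x′ = α_g(x·α_{g⁻¹}(x′))`, `β_g(y)·y′ = α_g(y·γ_{g⁻¹}(y′))`,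
`γ_g(z)·z′ = γ_g(z·α_{g⁻¹}(z′))` and `δ_g(w)·w′ = γ_g(w·γ_{g⁻¹}(w′))`. -/
theorem stmt_19 {G : Type*} [Group G] {A : Type*} [NonUnitalCStarAlgebra A]
    (α δ : G → (A ≃⋆ₐ[ℂ] A))
    (hα1 : ∀ x : A, α 1 x = x) (hαmul : ∀ (g h : G) (x : A), α (g * h) x = α g (α h x))
    (hδ1 : ∀ x : A, δ 1 x = x) (hδmul : ∀ (g h : G) (x : A), δ (g * h) x = δ g (δ h x))
    (θ : G → (Matrix (Fin 2) (Fin 2) A ≃⋆ₐ[ℂ] Matrix (Fin 2) (Fin 2) A))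
    (hθ1 : ∀ m, θ 1 m = m) (hθmul : ∀ (g h : G) m, θ (g * h) m = θ g (θ h m))
    (hc11 : ∀ (g : G) (a : A), θ g (single 0 0 a) = single 0 0 (α g a))
    (hc22 : ∀ (g : G) (a : A), θ g (single 1 1 a) = single 1 1 (δ g a))
    (β γ : G → A → A)
    (hβ : ∀ (g : G) (y : A), β g y = θ g (single 0 1 y) 0 1)
    (hγ : ∀ (g : G) (z : A), γ g z = θ g (single 1 0 z) 1 0) :
    ∀ (g : G) (x x' y y' z z' w w' : A),
      α g x * x' = α g (x * α g⁻¹ x') ∧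
      β g y * y' = α g (y * γ g⁻¹ y') ∧
      γ g z * z' = γ g (z * α g⁻¹ z') ∧
      δ g w * w' = γ g (w * γ g⁻¹ w') := by
  have hαinv : ∀ (g : G) (x : A), α g (α g⁻¹ x) = x := by
    intro g x; rw [← hαmul, mul_inv_cancel, hα1]
  -- θ g sends the (1,2) corner to the (1,2) corner
  have hM12 : ∀ (g : G) (y : A), θ g (single 0 1 y) = single 0 1 (β g y) := by
    intro g y
    set M := θ g (single 0 1 y) with hM
    have hcol : ∀ (i : Fin 2) (c : A), M i 0 * c = 0 := by
      intro i c
      have h0 : M * single 0 0 (α g (α g⁻¹ c)) = 0 := by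
        rw [← hc11, ← _root_.map_mul, single_mul_single_of_ne (h := by decide), map_zero]
      have := congrFun (congrFun h0 i) 0
      rwa [mul_single_apply_same, hαinv, Matrix.zero_apply] at this
    have hrow : ∀ (j : Fin 2) (c : A), c * M 1 j = 0 := by
      intro j c
      have h0 : single 1 1 (δ g (δ g⁻¹ c)) * M = 0 := by
        rw [← hc22, ← _root_.map_mul, single_mul_single_of_ne (h := by decide), map_zero]
      have := congrFun (congrFun h0 1) j
      rw [single_mul_apply_same, Matrix.zero_apply] at this
      rwa [show δ g (δ g⁻¹ c) = c by rw [← hδmul, mul_inv_cancel, hδ1]] at this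
    ext i j
    fin_cases i <;> fin_cases j <;>
      simp only [hβ, ← hM]
    · exact (aux_right_ann _ (hcol 0)).trans (by simp)
    · simp
    · exact (aux_right_ann _ (hcol 1)).trans (by simp)
    · exact (aux_left_ann _ (hrow 1)).trans (by simp)
  -- θ g sends the (2,1) corner to the (2,1) corner
  have hM21 : ∀ (g : G) (z : A), θ g (single 1 0 z) = single 1 0 (γ g z) := by
    intro g z
    set M := θ g (single 1 0 z) with hM
    have hcol : ∀ (i : Fin 2) (c : A), M i 1 * c = 0 := by
      intro i c
      have h0 : M * single 1 1 (δ g (δ g⁻¹ c)) = 0 := by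
        rw [← hc22, ← _root_.map_mul, single_mul_single_of_ne (h := by decide), map_zero]
      have := congrFun (congrFun h0 i) 1
      rw [mul_single_apply_same, Matrix.zero_apply] at this
      rwa [show δ g (δ g⁻¹ c) = c by rw [← hδmul, mul_inv_cancel, hδ1]] at this
    have hrow : ∀ (j : Fin 2) (c : A), c * M 0 j = 0 := by
      intro j c
      have h0 : single 0 0 (α g (α g⁻¹ c)) * M = 0 := by
        rw [← hc11, ← _root_.map_mul, single_mul_single_of_ne (h := by decide), map_zero]
      have := congrFun (congrFun h0 0) j
      rwa [single_mul_apply_same, hαinv, Matrix.zero_apply] at this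
    ext i j
    fin_cases i <;> fin_cases j <;>
      simp only [hγ, ← hM]
    · exact (aux_left_ann _ (hrow 0)).trans (by simp)
    · exact (aux_left_ann _ (hrow 1)).trans (by simp)
    · simp
    · exact (aux_right_ann _ (hcol 1)).trans (by simp)
  have hγinv : ∀ (g : G) (z : A), γ g (γ g⁻¹ z) = z := by
    intro g z
    have h0 : θ g (θ g⁻¹ (single 1 0 z)) = single 1 0 z := by
      rw [← hθmul, mul_inv_cancel, hθ1]
    rw [hM21, hM21] at h0
    have := congrFun (congrFun h0 1) 0
    simpa using this
  intro g x x' y y' z z' w w'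
  refine ⟨?_, ?_, ?_, ?_⟩
  · rw [_root_.map_mul, hαinv]
  · -- β
    have h0 : θ g (single 0 1 y * single 1 0 (γ g⁻¹ y')) =
        single 0 0 (α g (y * γ g⁻¹ y')) := by
      rw [single_mul_single_same, hc11]
    rw [_root_.map_mul, hM12, hM21, hγinv, single_mul_single_same] at h0
    have := congrFun (congrFun h0 0) 0
    simpa using this
  · -- γ
    have h0 : θ g (single 1 0 z * single 0 0 (α g⁻¹ z')) =
        single 1 0 (γ g (z * α g⁻¹ z')) := by
      rw [single_mul_single_same, hM21]
    rw [_root_.map_mul, hM21, hc11, hαinv, single_mul_single_same] at h0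
    have := congrFun (congrFun h0 1) 0
    simpa using this
  · -- δ
    have h0 : θ g (single 1 1 w * single 1 0 (γ g⁻¹ w')) =
        single 1 0 (γ g (w * γ g⁻¹ w')) := by
      rw [single_mul_single_same, hM21]
    rw [_root_.map_mul, hc22, hM21, hγinv, single_mul_single_same] at h0
    have := congrFun (congrFun h0 1) 0
    simpa using this
end
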